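/- arXiv:0907.0513 — 2 statements merged into one kernel-verified Lean document; each statement's English description precedes it below -/
import Mathlib

section
/- The exponential generating function Σ_{n≥0} G_1(n) x^n/n! equals e^{1-√(1-2x)} / √(1-2x). -/
/-!
The sum is the derivative of `F x = exp (1 - √(1 - 2x))`: indeed `F' = F / √(1 - 2x)`, and
differentiating once more gives the linear ODE `(1 - 2x) F'' = F' + F`. Taking `n` derivatives
at `0` turns it into `F⁽ⁿ⁺²⁾(0) = (2n + 1) F⁽ⁿ⁺¹⁾(0) + F⁽ⁿ⁾(0)`, which with `F(0) = F'(0) = 1`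
is the Bessel-polynomial recurrence `G₁(n + 2) = (2n + 3) G₁(n + 1) + G₁(n)`, shifted by one.
So `F⁽ⁿ⁺¹⁾(0) = G₁ n`, and since `F'` is analytic at `0` it is the sum of its Taylor series.
-/

/-- `G₁ n = Σ_{i=0}^{n} (n+i)!/((n-i)!·i!·2^i)`. -/
noncomputable def G1 (n : ℕ) : ℝ :=
  ∑ i ∈ Finset.range (n + 1),
    (Nat.factorial (n + i) : ℝ) /
      ((Nat.factorial (n - i) : ℝ) * (Nat.factorial i : ℝ) * 2 ^ i)

open Filter Topology Real
open scoped Nat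

section LinearODE

variable {𝕜 : Type*} [NontriviallyNormedField 𝕜]

theorem iteratedDeriv_succ_fun_id_mul_zero {n : ℕ} {g : 𝕜 → 𝕜}
    (hg : ContDiffAt 𝕜 (n + 1) g 0) :
    iteratedDeriv (n + 1) (fun x => x * g x) 0 = (n + 1) * iteratedDeriv n g 0 := by
  rw [iteratedDeriv_fun_mul (f := fun x => x) contDiffAt_id hg]
  simp [iteratedDeriv_fun_id_zero]

theorem iteratedDeriv_add_two_of_ode [CompleteSpace 𝕜] {f : 𝕜 → 𝕜} (hf : AnalyticAt 𝕜 f 0)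
    (a b c d : 𝕜)
    (hode : ∀ᶠ x in 𝓝 0, (a + b * x) * deriv (deriv f) x = c * deriv f x + d * f x) (n : ℕ) :
    a * iteratedDeriv (n + 2) f 0 + n * b * iteratedDeriv (n + 1) f 0
      = c * iteratedDeriv (n + 1) f 0 + d * iteratedDeriv n f 0 := by
  have hf₂ : ContDiffAt 𝕜 n (deriv (deriv f)) 0 := hf.deriv.deriv.contDiffAt
  have hf₁ : ContDiffAt 𝕜 n (deriv f) 0 := hf.deriv.contDiffAt
  have hf₀ : ContDiffAt 𝕜 n f 0 := hf.contDiffAt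
  have hode' : (fun x => a * deriv (deriv f) x + b * (x * deriv (deriv f) x))
      =ᶠ[𝓝 0] fun x => c * deriv f x + d * f x :=
    hode.mono fun x hx => by simp only [← hx]; ring
  have hmul :
      iteratedDeriv n (fun x => x * deriv (deriv f) x) 0 = n * iteratedDeriv (n + 1) f 0 := by
    rcases n with _ | n
    · simp
    · rw [iteratedDeriv_succ_fun_id_mul_zero hf.deriv.deriv.contDiffAt, iteratedDeriv_succ',
        iteratedDeriv_succ']
      push_cast; ring
  have key := hode'.iteratedDeriv_eq n
  rw [iteratedDeriv_fun_add (by fun_prop) (by fun_prop),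
    iteratedDeriv_fun_add (by fun_prop) (by fun_prop),
    iteratedDeriv_const_mul _ hf₂, iteratedDeriv_const_mul _ (by fun_prop),
    iteratedDeriv_const_mul _ hf₁, iteratedDeriv_const_mul _ hf₀, hmul] at key
  simp only [iteratedDeriv_succ'] at key ⊢
  linear_combination key

end LinearODE

/- Writing `(n + i)! / (n - i)!` as a descending factorial makes the term vanish for `i > n`, so
the three-term recurrence below holds for every `i`, with no boundary cases. -/
noncomputable def besselCoeff (n i : ℕ) : ℝ := (n + i).descFactorial (2 * i) / (i ! * 2 ^ i)

theorem besselCoeff_eq_zero_of_lt {n i : ℕ} (h : n < i) : besselCoeff n i = 0 := by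
  simp [besselCoeff, Nat.descFactorial_eq_zero_iff_lt.2 (by omega : n + i < 2 * i)]

theorem G1_eq_sum_besselCoeff (n : ℕ) : G1 n = ∑ i ∈ Finset.range (n + 1), besselCoeff n i := by
  refine Finset.sum_congr rfl fun i hi => ?_
  have hi : i ≤ n := Nat.lt_succ_iff.1 (Finset.mem_range.1 hi)
  rw [besselCoeff, ← Nat.factorial_mul_descFactorial (by omega : 2 * i ≤ n + i),
    show n + i - 2 * i = n - i by omega]
  push_cast
  field_simp

theorem besselCoeff_add_two_succ (n i : ℕ) :
    besselCoeff (n + 2) (i + 1) = (2 * n + 3) * besselCoeff (n + 1) i + besselCoeff n (i + 1) := by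
  have h₁ : (n + 2 + (i + 1)).descFactorial (2 * (i + 1))
      = (n + i + 3) * (n + i + 2) * (n + i + 1).descFactorial (2 * i) := by
    rw [show n + 2 + (i + 1) = n + i + 1 + 1 + 1 by omega,
      show 2 * (i + 1) = 2 * i + 1 + 1 by omega, Nat.succ_descFactorial_succ, Nat.succ_descFactorial_succ]
    ring
  have h₂ : (n + (i + 1)).descFactorial (2 * (i + 1))
      = (n - i) * ((n + 1 - i) * (n + i + 1).descFactorial (2 * i)) := by
    rw [show n + (i + 1) = n + i + 1 by omega, show 2 * (i + 1) = 2 * i + 1 + 1 by omega,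
      Nat.descFactorial_succ, Nat.descFactorial_succ, show n + i + 1 - (2 * i + 1) = n - i by omega,
      show n + i + 1 - 2 * i = n + 1 - i by omega]
  simp only [besselCoeff, h₁, h₂, show n + 1 + i = n + i + 1 by omega]
  rcases lt_trichotomy i (n + 1) with hi | rfl | hi
  · push_cast [Nat.cast_sub (show i ≤ n by omega), Nat.cast_sub hi.le, Nat.factorial_succ]
    field_simp
    ring
  · push_cast [Nat.sub_self, Nat.factorial_succ]
    field_simp
    ring
  · simp [Nat.descFactorial_eq_zero_iff_lt.2 (by omega : n + i + 1 < 2 * i)]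

theorem G1_add_two (n : ℕ) : G1 (n + 2) = (2 * n + 3) * G1 (n + 1) + G1 n := by
  have hvanish : ∑ i ∈ Finset.range (n + 3), besselCoeff n i = G1 n := by
    rw [G1_eq_sum_besselCoeff, Finset.sum_range_succ, Finset.sum_range_succ,
      besselCoeff_eq_zero_of_lt (by omega), besselCoeff_eq_zero_of_lt (by omega), add_zero,
      add_zero]
  rw [G1_eq_sum_besselCoeff, Finset.sum_range_succ', Finset.sum_congr rfl fun i _ =>
    besselCoeff_add_two_succ n i, Finset.sum_add_distrib, ← Finset.mul_sum, ← G1_eq_sum_besselCoeff,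
    ← hvanish, Finset.sum_range_succ' (besselCoeff n)]
  simp [besselCoeff]
  ring

theorem G1_zero : G1 0 = 1 := by simp [G1]

theorem G1_one : G1 1 = 2 := by norm_num [G1, Finset.sum_range_succ]

noncomputable def expOneSubSqrt (x : ℝ) : ℝ := exp (1 - √(1 - 2 * x))

theorem hasDerivAt_sqrt_one_sub_two_mul {x : ℝ} (hx : 2 * x < 1) :
    HasDerivAt (fun y => √(1 - 2 * y)) (-(√(1 - 2 * x))⁻¹) x := by
  have hpos : 0 < √(1 - 2 * x) := sqrt_pos.2 (by linarith)
  refine (((hasDerivAt_id' x).const_mul 2).const_sub 1 |>.sqrt (by linarith)).congr_deriv ?_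
  field_simp [hpos.ne']

theorem hasDerivAt_expOneSubSqrt {x : ℝ} (hx : 2 * x < 1) :
    HasDerivAt expOneSubSqrt (expOneSubSqrt x / √(1 - 2 * x)) x := by
  have h := ((hasDerivAt_sqrt_one_sub_two_mul hx).const_sub 1).exp
  rwa [neg_neg, ← div_eq_mul_inv] at h

theorem hasDerivAt_expOneSubSqrt_div_sqrt {x : ℝ} (hx : 2 * x < 1) :
    HasDerivAt (fun y => expOneSubSqrt y / √(1 - 2 * y))
      ((expOneSubSqrt x + expOneSubSqrt x / √(1 - 2 * x)) / (1 - 2 * x)) x := by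
  have hpos : 0 < √(1 - 2 * x) := sqrt_pos.2 (by linarith)
  refine ((hasDerivAt_expOneSubSqrt hx).div (hasDerivAt_sqrt_one_sub_two_mul hx)
    hpos.ne').congr_deriv ?_
  rw [sq_sqrt (by linarith : 0 ≤ 1 - 2 * x)]
  field_simp
  ring

theorem deriv_expOneSubSqrt_eventuallyEq :
    deriv expOneSubSqrt =ᶠ[𝓝 0] fun y => expOneSubSqrt y / √(1 - 2 * y) := by
  filter_upwards [eventually_lt_nhds (by norm_num : (0 : ℝ) < 1 / 2)] with x hx
  exact (hasDerivAt_expOneSubSqrt (by linarith)).deriv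

theorem eventually_ode_expOneSubSqrt :
    ∀ᶠ x in 𝓝 0, (1 - 2 * x) * deriv (deriv expOneSubSqrt) x
      = deriv expOneSubSqrt x + expOneSubSqrt x := by
  filter_upwards [eventually_lt_nhds (by norm_num : (0 : ℝ) < 1 / 2),
    deriv_expOneSubSqrt_eventuallyEq, deriv_expOneSubSqrt_eventuallyEq.deriv] with x hx h₁ h₂
  rw [h₁, h₂, (hasDerivAt_expOneSubSqrt_div_sqrt (by linarith)).deriv]
  field_simp [show 1 - 2 * x ≠ 0 by linarith]
  ring

theorem analyticAt_expOneSubSqrt {x : ℝ} (hx : 2 * x < 1) : AnalyticAt ℝ expOneSubSqrt x := by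
  apply ContDiffAt.analyticAt
  unfold expOneSubSqrt
  fun_prop (disch := linarith)

theorem analyticAt_expOneSubSqrt_div_sqrt {x : ℝ} (hx : 2 * x < 1) :
    AnalyticAt ℝ (fun y => expOneSubSqrt y / √(1 - 2 * y)) x := by
  apply ContDiffAt.analyticAt
  unfold expOneSubSqrt
  fun_prop (disch := first | linarith | exact (sqrt_pos.2 (by linarith)).ne')

theorem eq_G1_of_recurrence {a : ℕ → ℝ} (h₀ : a 0 = 1) (h₁ : a 1 = 1)
    (hrec : ∀ n : ℕ, a (n + 2) = (2 * n + 1) * a (n + 1) + a n) (n : ℕ) : a (n + 1) = G1 n := by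
  suffices a (n + 1) = G1 n ∧ a (n + 2) = G1 (n + 1) from this.1
  induction n with
  | zero => exact ⟨by rw [h₁, G1_zero], by rw [hrec, h₀, h₁, G1_one]; norm_num⟩
  | succ n ih =>
    refine ⟨ih.2, ?_⟩
    rw [hrec, ih.1, ih.2, G1_add_two]
    push_cast
    ring

theorem iteratedDeriv_succ_expOneSubSqrt_zero (n : ℕ) :
    iteratedDeriv (n + 1) expOneSubSqrt 0 = G1 n := by
  refine eq_G1_of_recurrence (a := fun n => iteratedDeriv n expOneSubSqrt 0) ?_ ?_ (fun n => ?_) n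
  · simp [expOneSubSqrt]
  · simp [iteratedDeriv_one, (hasDerivAt_expOneSubSqrt (by norm_num : 2 * (0 : ℝ) < 1)).deriv,
      expOneSubSqrt]
  · have := iteratedDeriv_add_two_of_ode (analyticAt_expOneSubSqrt (by norm_num)) 1 (-2) 1 1
      (eventually_ode_expOneSubSqrt.mono fun x hx => by linear_combination hx) n
    linear_combination this

theorem hasFPowerSeriesAt_expOneSubSqrt_div_sqrt :
    HasFPowerSeriesAt (fun x => expOneSubSqrt x / √(1 - 2 * x))
      (FormalMultilinearSeries.ofScalars ℝ fun n => G1 n / n !) 0 := by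
  have h := (analyticAt_expOneSubSqrt_div_sqrt (x := 0) (by norm_num)).hasFPowerSeriesAt
  have hcoeff : ∀ n : ℕ, iteratedDeriv n (fun x => expOneSubSqrt x / √(1 - 2 * x)) 0 = G1 n :=
    fun n => by rw [← deriv_expOneSubSqrt_eventuallyEq.iteratedDeriv_eq, ← iteratedDeriv_succ',
      iteratedDeriv_succ_expOneSubSqrt_zero]
  simpa only [hcoeff] using h

theorem stmt_11 :
    ∃ ε > (0 : ℝ), ∀ x : ℝ, |x| < ε →
      HasSum (fun n : ℕ => G1 n * x ^ n / Nat.factorial n)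
        (Real.exp (1 - Real.sqrt (1 - 2 * x)) / Real.sqrt (1 - 2 * x)) := by
  obtain ⟨ε, hε, hsum⟩ :=
    Metric.eventually_nhds_iff.1 hasFPowerSeriesAt_expOneSubSqrt_div_sqrt.eventually_hasSum
  refine ⟨ε, hε, fun x hx => ?_⟩
  have h := hsum (by simpa using hx)
  rw [FormalMultilinearSeries.ofScalars_apply_eq', zero_add] at h
  simpa only [smul_eq_mul, mul_div_right_comm, mul_comm (x ^ _), expOneSubSqrt] using h
end

section
/- G_1(n) is asymptotic to e·(2n)! / (n!·2^n) as n → ∞; that is, the limit of G_1(n)·n!·2^n / ((2n)!) as n → ∞ is e. -/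
open Filter Finset Asymptotics
open scoped Nat Topology

theorem Nat.pow_mul_descFactorial_le_descFactorial_mul (m n : ℕ) :
    ∀ k, m ^ k * n.descFactorial k ≤ (m * n).descFactorial k
  | 0 => by simp
  | k + 1 => by
    have hfactor : m * (n - k) ≤ m * n - k := by
      rcases m.eq_zero_or_pos with rfl | hm
      · simp
      · rw [Nat.mul_sub]
        exact Nat.sub_le_sub_left (Nat.le_mul_of_pos_left k hm) _
    rw [Nat.descFactorial_succ, Nat.descFactorial_succ, pow_succ]
    calc m ^ k * m * ((n - k) * n.descFactorial k)
        = m * (n - k) * (m ^ k * n.descFactorial k) := by ring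
      _ ≤ (m * n - k) * (m * n).descFactorial k :=
        Nat.mul_le_mul hfactor (pow_mul_descFactorial_le_descFactorial_mul m n k)

theorem Real.hasSum_inv_factorial : HasSum (fun j : ℕ => (j ! : ℝ)⁻¹) (Real.exp 1) := by
  simpa [Real.exp_eq_exp_ℝ] using NormedSpace.expSeries_div_hasSum_exp (1 : ℝ)

namespace G1

/-- The term `i = n - j` of `G1 n`, multiplied by `n! 2ⁿ / (2n)!`. -/
noncomputable def scaledTerm (n j : ℕ) : ℝ :=
  2 ^ j * n.descFactorial j / (j ! * (2 * n).descFactorial j)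

lemma scaledTerm_nonneg (n j : ℕ) : 0 ≤ scaledTerm n j := by
  unfold scaledTerm
  positivity

lemma scaledTerm_eq_zero_of_lt {n j : ℕ} (h : n < j) : scaledTerm n j = 0 := by
  simp [scaledTerm, Nat.descFactorial_eq_zero_iff_lt.mpr h]

lemma scaledTerm_le_inv_factorial (n j : ℕ) : scaledTerm n j ≤ (j ! : ℝ)⁻¹ := by
  have hle : (2 ^ j * n.descFactorial j : ℝ) ≤ (2 * n).descFactorial j := by
    exact_mod_cast Nat.pow_mul_descFactorial_le_descFactorial_mul 2 n j
  rw [scaledTerm, div_mul_eq_div_div_swap, div_eq_mul_inv _ (j ! : ℝ)]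
  exact mul_le_of_le_one_left (by positivity) (div_le_one_of_le₀ hle (Nat.cast_nonneg _))

lemma tendsto_scaledTerm (j : ℕ) :
    Tendsto (scaledTerm · j) atTop (𝓝 (j ! : ℝ)⁻¹) := by
  have h2n : Tendsto (fun n : ℕ => 2 * n) atTop atTop :=
    tendsto_id.const_mul_atTop' two_pos
  have hratio := (isEquivalent_descFactorial j).div
    ((isEquivalent_descFactorial j).comp_tendsto h2n)
  have hpow : Tendsto (fun n : ℕ => (n : ℝ) ^ j / ((2 * n : ℕ) : ℝ) ^ j) atTop
      (𝓝 (2 ^ j)⁻¹) := by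
    refine tendsto_const_nhds.congr' ?_
    filter_upwards [eventually_ne_atTop 0] with n hn
    push_cast
    field_simp
    ring
  have := (hratio.symm.tendsto_nhds hpow).const_mul (2 ^ j / j ! : ℝ)
  convert this using 1
  · ext n
    simp only [scaledTerm, Pi.div_apply, Function.comp_apply]
    ring
  · field_simp

lemma term_reflect_mul_div_eq_scaledTerm {n j : ℕ} (h : j ≤ n) :
    ((n + (n - j))! : ℝ) / ((n - (n - j))! * (n - j)! * 2 ^ (n - j)) * n ! * 2 ^ n / (2 * n)! =
      scaledTerm n j := by
  have hfact : (n ! : ℝ) = (n - j)! * n.descFactorial j := by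
    exact_mod_cast (Nat.factorial_mul_descFactorial h).symm
  have hfact2 : ((2 * n)! : ℝ) = (2 * n - j)! * (2 * n).descFactorial j := by
    exact_mod_cast (Nat.factorial_mul_descFactorial (by omega : j ≤ 2 * n)).symm
  have hpow : (2 : ℝ) ^ n = 2 ^ (n - j) * 2 ^ j := by
    rw [← pow_add, Nat.sub_add_cancel h]
  have hD : ((2 * n).descFactorial j : ℝ) ≠ 0 := by
    exact_mod_cast (Nat.descFactorial_pos.mpr (by omega)).ne'
  rw [show n + (n - j) = 2 * n - j by omega, Nat.sub_sub_self h, hfact, hfact2, hpow, scaledTerm]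
  field_simp

lemma mul_factorial_mul_two_pow_div_eq_tsum (n : ℕ) :
    G1 n * n ! * 2 ^ n / (2 * n)! = ∑' j, scaledTerm n j := by
  rw [tsum_eq_sum (s := range (n + 1)) fun j hj =>
    scaledTerm_eq_zero_of_lt (by simpa using hj), G1, sum_mul, sum_mul, sum_div,
    ← sum_range_reflect]
  refine sum_congr rfl fun j hj => ?_
  rw [Nat.add_sub_cancel]
  exact term_reflect_mul_div_eq_scaledTerm (Nat.lt_succ_iff.mp (mem_range.mp hj))

end G1

theorem stmt_12 :
    Filter.Tendsto
      (fun n : ℕ => G1 n * Nat.factorial n * 2 ^ n / Nat.factorial (2 * n))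
      Filter.atTop (nhds (Real.exp 1)) := by
  have h := tendsto_tsum_of_dominated_convergence Real.hasSum_inv_factorial.summable
    G1.tendsto_scaledTerm (.of_forall fun n j => by
      rw [Real.norm_of_nonneg (G1.scaledTerm_nonneg n j)]
      exact G1.scaledTerm_le_inv_factorial n j)
  rw [Real.hasSum_inv_factorial.tsum_eq] at h
  exact h.congr fun n => (G1.mul_factorial_mul_two_pow_div_eq_tsum n).symm
end
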